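/- Let J ⊆ {1,…,m} and let i, j ∈ J with i < j and J_{>j} ≠ ∅. Then c(J∖{i,j}, [u_i,u_j]) = (−1)^{|J_{>j}|} c(J∖{i}, u_i) − (−1)^{|J_{>i}|} c(J∖{j}, u_j) + Σ (−1)^{θ(A,B)+|B|} [c(A,u_i), c(B,u_j)], where the sum runs over all ordered partitions J∖{i,j} = A ⊔ B such that A contains an element greater than i and B contains an element greater than j. -/
import Mathlib


universe u

section GradedCommutators

variable {R : Type u} [Ring R] {m : ℕ}

/-- The sign `(−1)^z` as an element of the ring `R`, for `z : ℤ`. -/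
def sgn (R : Type u) [Ring R] (z : ℤ) : R := (((-1 : Rˣ) ^ z : Rˣ) : R)

/-- The graded commutator `[a,b] = a·b − (−1)^{pq}·b·a` of elements `a`, `b` of degrees
`p`, `q`. -/
def gbrk (p q : ℤ) (a b : R) : R := a * b - sgn R (p * q) * (b * a)

/-- The iterated commutator `[u_{i₁},[u_{i₂},…,[u_{i_k},x]…]]` along a list `i₁,…,i_k`,
where the `u_i` have degree `1` and `x` has degree `d`. -/
def cList (u : Fin m → R) (d : ℤ) (x : R) : List (Fin m) → R
  | [] => x
  | i :: l => gbrk 1 (d + l.length) (u i) (cList u d x l)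

/-- `c(I,x) = [u_{i₁},[u_{i₂},…,[u_{i_k},x]…]]` for `I = {i₁ < … < i_k}`,
where `x` has degree `d`. -/
def cNest (u : Fin m → R) (d : ℤ) (x : R) (I : Finset (Fin m)) : R :=
  cList u d x (I.sort (· ≤ ·))

/-- `û_I = u_{i₁} ⋯ u_{i_k}` for `I = {i₁ < … < i_k}`. -/
def uHat (u : Fin m → R) (I : Finset (Fin m)) : R :=
  ((I.sort (· ≤ ·)).map u).prod

/-- The Koszul sign exponent `θ(A,B) = #{(a,b) ∈ A × B | a > b}`. -/
def theta (A B : Finset (Fin m)) : ℕ :=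
  ((A ×ˢ B).filter fun p => p.2 < p.1).card

end GradedCommutators

section AuxLemmas
variable {R : Type u} [Ring R] {m : ℕ}

-- sgn lemmas
lemma sgn_even {z : ℤ} (h : Even z) : sgn R z = 1 := by
  unfold sgn; rw [h.neg_one_zpow]; rfl

lemma sgn_odd {z : ℤ} (h : Odd z) : sgn R z = -1 := by
  obtain ⟨k, rfl⟩ := h
  unfold sgn
  rw [zpow_add, (even_two_mul k).neg_one_zpow, one_mul, zpow_one]
  simp

lemma sgn_one_or_neg_one (z : ℤ) : sgn R z = 1 ∨ sgn R z = -1 := by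
  rcases Int.even_or_odd z with h | h
  · exact Or.inl (sgn_even h)
  · exact Or.inr (sgn_odd h)

lemma sgn_add (x y : ℤ) : sgn R (x + y) = sgn R x * sgn R y := by
  unfold sgn; rw [zpow_add]; rfl

lemma sgn_central (z : ℤ) (a : R) : sgn R z * a = a * sgn R z := by
  rcases sgn_one_or_neg_one (R := R) z with h | h <;> rw [h] <;> simp

lemma sgn_mul_comm (x y : ℤ) : sgn R x * sgn R y = sgn R y * sgn R x :=
  sgn_central x (sgn R y)

lemma sgn_mul_self (z : ℤ) : sgn R z * sgn R z = 1 := by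
  rcases sgn_one_or_neg_one (R := R) z with h | h <;> rw [h] <;> simp

lemma sgn_natCast_one (n : ℕ) : sgn R ((1:ℤ)) = -1 := sgn_odd odd_one

-- Jacobi identity
lemma gbrk_jacobi (p q r : ℤ) (a b c : R) :
    gbrk p (q + r) a (gbrk q r b c)
      = gbrk (p + q) r (gbrk p q a b) c + sgn R (p * q) * gbrk q (p + r) b (gbrk p r a c) := by
  have h1 : p * (q + r) = p * q + p * r := by ring
  have h2 : (p + q) * r = p * r + q * r:= by ring
  have h3 : q * (p + r) = p * q + q * r := by rw [mul_add, mul_comm q p]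
  unfold gbrk
  rw [h1, h2, h3, sgn_add, sgn_add, sgn_add]
  rcases sgn_one_or_neg_one (R := R) (p * q) with hpq | hpq <;>
  rcases sgn_one_or_neg_one (R := R) (p * r) with hpr | hpr <;>
  rcases sgn_one_or_neg_one (R := R) (q * r) with hqr | hqr <;>
  rw [hpq, hpr, hqr] <;> noncomm_ring

lemma gbrk_antisymm (p q : ℤ) (a b : R) :
    gbrk p q a b = - (sgn R (p * q) * gbrk q p b a) := by
  unfold gbrk
  rw [mul_comm q p]
  rcases sgn_one_or_neg_one (R := R) (p * q) with h | h <;> rw [h] <;> noncomm_ring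


end AuxLemmas

section More
variable {R : Type u} [Ring R] {m : ℕ}

lemma theta_eq_sum (A B : Finset (Fin m)) :
    theta A B = ∑ a ∈ A, (B.filter (fun b => b < a)).card := by
  unfold theta
  rw [Finset.card_filter, Finset.sum_product]
  exact Finset.sum_congr rfl fun a _ => (Finset.card_filter _ _).symm

lemma theta_insert_left {t : Fin m} {A B : Finset (Fin m)} (ht : t ∉ A)
    (hB : ∀ b ∈ B, t < b) : theta (insert t A) B = theta A B := by
  rw [theta_eq_sum, theta_eq_sum, Finset.sum_insert ht]
  have : B.filter (fun b => b < t) = ∅ := by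
    rw [Finset.filter_eq_empty_iff]
    exact fun b hb => not_lt_of_gt (hB b hb)
  rw [this]
  simp

lemma theta_insert_right {t : Fin m} {A B : Finset (Fin m)} (ht : t ∉ B)
    (hA : ∀ a ∈ A, t < a) : theta A (insert t B) = theta A B + A.card := by
  rw [theta_eq_sum, theta_eq_sum, Finset.card_eq_sum_ones A, ← Finset.sum_add_distrib]
  refine Finset.sum_congr rfl fun a ha => ?_
  rw [Finset.filter_insert, if_pos (hA a ha),
    Finset.card_insert_of_notMem (fun hc => ht (Finset.mem_of_mem_filter t hc))]

lemma cNest_insert_min (u : Fin m → R) (d : ℤ) (x : R) {t : Fin m} {I : Finset (Fin m)}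
    (ht : t ∉ I) (hmin : ∀ s ∈ I, t < s) :
    cNest u d x (insert t I) = gbrk 1 (d + I.card) (u t) (cNest u d x I) := by
  unfold cNest
  rw [Finset.sort_insert (· ≤ ·) (fun b hb => (hmin b hb).le) ht]
  show gbrk 1 (d + (I.sort (· ≤ ·)).length) _ _ = _
  rw [Finset.length_sort]

end More

section Helpers
variable {R : Type u} [Ring R] {m : ℕ}

lemma sgn_congr {x y : ℤ} (h : x = y) : sgn R x = sgn R y := by rw [h]

lemma gbrk_congr {p p' q q' : ℤ} (hp : p = p') (hq : q = q') (a b : R) :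
    gbrk p q a b = gbrk p' q' a b := by rw [hp, hq]

lemma gbrk_add_right (p q : ℤ) (a x y : R) :
    gbrk p q a (x + y) = gbrk p q a x + gbrk p q a y := by
  unfold gbrk; noncomm_ring

lemma gbrk_zero_right (p q : ℤ) (a : R) : gbrk p q a 0 = 0 := by
  unfold gbrk; noncomm_ring

lemma gbrk_sgn_right (p q z : ℤ) (a x : R) :
    gbrk p q a (sgn R z * x) = sgn R z * gbrk p q a x := by
  unfold gbrk
  rcases sgn_one_or_neg_one (R := R) z with h | h <;> rw [h] <;> noncomm_ring

lemma gbrk_sum {ι : Type*} (p q : ℤ) (a : R) (s : Finset ι) (f : ι → R) :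
    gbrk p q a (∑ x ∈ s, f x) = ∑ x ∈ s, gbrk p q a (f x) := by
  unfold gbrk
  rw [Finset.mul_sum, Finset.sum_mul, Finset.mul_sum, ← Finset.sum_sub_distrib]

lemma gbrk_base (a b c : R) :
    gbrk 1 2 a (gbrk 1 1 b c)
      = -(gbrk 1 2 c (gbrk 1 1 a b)) - gbrk 1 2 b (gbrk 1 1 a c) := by
  have h2 : sgn R (1 * 2) = 1 := sgn_even (by norm_num)
  have h1 : sgn R (1 * 1) = -1 := sgn_odd (by norm_num)
  unfold gbrk
  rw [h1, h2]
  noncomm_ring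

lemma swap_step (b : ℤ) (a x Y : R) :
    gbrk 1 (2 + b) a (gbrk 1 (1 + b) x Y)
      = gbrk 2 (1 + b) (gbrk 1 1 a x) Y - gbrk 1 (2 + b) x (gbrk 1 (1 + b) a Y) := by
  have h := gbrk_jacobi 1 1 (1 + b) a x Y
  have e1 : (1 : ℤ) + (1 + b) = 2 + b := by ring
  have e2 : (1 : ℤ) + 1 = 2 := by ring
  rw [e1, e2] at h
  rw [h, sgn_odd (by norm_num : Odd ((1:ℤ) * 1))]
  noncomm_ring

lemma cNest_empty (u : Fin m → R) (d : ℤ) (x : R) : cNest u d x ∅ = x := by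
  unfold cNest
  rw [Finset.sort_empty]
  rfl

lemma cNest_singleton (u : Fin m → R) (d : ℤ) (x : R) (t : Fin m) :
    cNest u d x {t} = gbrk 1 d (u t) x := by
  have : ({t} : Finset (Fin m)) = insert t ∅ := rfl
  rw [this, cNest_insert_min u d x (Finset.notMem_empty t) (by simp), cNest_empty]
  exact gbrk_congr rfl (by simp) _ _

lemma theta_empty_right (A : Finset (Fin m)) : theta A ∅ = 0 := by
  simp [theta_eq_sum]

lemma theta_singleton_right {A : Finset (Fin m)} {t : Fin m} (hA : ∀ a ∈ A, t < a) :
    theta A {t} = A.card := by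
  have : ({t} : Finset (Fin m)) = insert t ∅ := rfl
  rw [this, theta_insert_right (Finset.notMem_empty t) hA, theta_empty_right, zero_add]

lemma theta_singleton_left {B : Finset (Fin m)} {t : Fin m} (hB : ∀ b ∈ B, t < b)
    (ht : t ∉ B) : theta {t} B = 0 := by
  have : ({t} : Finset (Fin m)) = insert t (∅ : Finset (Fin m)) := rfl
  rw [this, theta_insert_left (Finset.notMem_empty t) hB]
  simp [theta_eq_sum]

lemma insert_sdiff_insert_eq {α : Type*} [DecidableEq α] {t : α} {K' A' : Finset α}
    (htK' : t ∉ K') : insert t K' \ insert t A' = K' \ A' := by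
  rw [Finset.insert_sdiff_insert]
  ext x
  simp only [Finset.mem_sdiff, Finset.mem_insert, not_or]
  constructor
  · rintro ⟨hx, _, h⟩; exact ⟨hx, h⟩
  · rintro ⟨hx, h⟩; exact ⟨hx, fun he => htK' (he ▸ hx), h⟩

/-- The core Leibniz computation on a sum term. -/
lemma leibniz_step (u : Fin m → R) (i j t : Fin m) (A' B' : Finset (Fin m))
    (htA : t ∉ A') (htB : t ∉ B') (hA : ∀ s ∈ A', t < s) (hB : ∀ s ∈ B', t < s) :
    gbrk 1 (2 + ((A'.card : ℤ) + (B'.card : ℤ))) (u t)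
        (sgn R ((theta A' B' : ℤ) + (B'.card : ℤ))
          * gbrk (1 + (A'.card : ℤ)) (1 + (B'.card : ℤ))
              (cNest u 1 (u i) A') (cNest u 1 (u j) B'))
      = sgn R ((theta (insert t A') B' : ℤ) + (B'.card : ℤ))
          * gbrk (1 + ((insert t A').card : ℤ)) (1 + (B'.card : ℤ))
              (cNest u 1 (u i) (insert t A')) (cNest u 1 (u j) B')
        + sgn R ((theta A' (insert t B') : ℤ) + ((insert t B').card : ℤ))
          * gbrk (1 + (A'.card : ℤ)) (1 + ((insert t B').card : ℤ))
              (cNest u 1 (u i) A') (cNest u 1 (u j) (insert t B')) := by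
  rw [gbrk_sgn_right]
  have hdeg : (2 : ℤ) + ((A'.card : ℤ) + (B'.card : ℤ))
      = (1 + (A'.card : ℤ)) + (1 + (B'.card : ℤ)) := by ring
  rw [gbrk_congr (rfl : (1 : ℤ) = 1) hdeg,
    gbrk_jacobi 1 (1 + (A'.card : ℤ)) (1 + (B'.card : ℤ))]
  rw [← cNest_insert_min u 1 (u i) htA hA, ← cNest_insert_min u 1 (u j) htB hB]
  conv_rhs => rw [theta_insert_left htA hB, theta_insert_right htB hA,
    Finset.card_insert_of_notMem htA, Finset.card_insert_of_notMem htB]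
  rw [gbrk_congr (show (1 : ℤ) + ((A'.card + 1 : ℕ) : ℤ) = 1 + (1 + (A'.card : ℤ)) by
        push_cast; ring) (rfl : (1 : ℤ) + (B'.card : ℤ) = 1 + (B'.card : ℤ))]
  rw [gbrk_congr (rfl : (1 : ℤ) + (A'.card : ℤ) = 1 + (A'.card : ℤ))
      (show (1 : ℤ) + ((B'.card + 1 : ℕ) : ℤ) = 1 + (1 + (B'.card : ℤ)) by push_cast; ring)]
  rw [show ((theta A' B' + A'.card : ℕ) : ℤ) + ((B'.card + 1 : ℕ) : ℤ)
      = ((theta A' B' : ℤ) + (B'.card : ℤ)) + 1 * (1 + (A'.card : ℤ)) by push_cast; ring]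
  simp only [sgn_add]
  noncomm_ring

end Helpers

section HSteps
variable {R : Type u} [Ring R] {m : ℕ}

/-- Core computation for sum terms. -/
lemma H3_core (u : Fin m → R) (i j t : Fin m) {K' A' : Finset (Fin m)}
    (htK' : t ∉ K') (hmin : ∀ s ∈ K', t < s) (hA' : A' ⊆ K') :
    gbrk 1 (2 + (K'.card : ℤ)) (u t)
        (sgn R ((theta A' (K' \ A') : ℤ) + ((K' \ A').card : ℤ))
          * gbrk (1 + (A'.card : ℤ)) (1 + ((K' \ A').card : ℤ))
              (cNest u 1 (u i) A') (cNest u 1 (u j) (K' \ A')))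
      = sgn R ((theta A' (insert t K' \ A') : ℤ) + ((insert t K' \ A').card : ℤ))
          * gbrk (1 + (A'.card : ℤ)) (1 + ((insert t K' \ A').card : ℤ))
              (cNest u 1 (u i) A') (cNest u 1 (u j) (insert t K' \ A'))
        + sgn R ((theta (insert t A') (insert t K' \ insert t A') : ℤ)
              + ((insert t K' \ insert t A').card : ℤ))
          * gbrk (1 + ((insert t A').card : ℤ)) (1 + ((insert t K' \ insert t A').card : ℤ))
              (cNest u 1 (u i) (insert t A')) (cNest u 1 (u j) (insert t K' \ insert t A')) := by
  have htA : t ∉ A' := fun h => htK' (hA' h)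
  have hd1 : insert t K' \ A' = insert t (K' \ A') := Finset.insert_sdiff_of_notMem _ htA
  have hd2 : insert t K' \ insert t A' = K' \ A' := insert_sdiff_insert_eq htK'
  have hcard : (A'.card : ℤ) + ((K' \ A').card : ℤ) = (K'.card : ℤ) := by
    rw [← Finset.card_sdiff_add_card_eq_card hA']; push_cast; ring
  have htB : t ∉ K' \ A' := fun h => htK' (Finset.mem_sdiff.mp h).1
  have hBgt : ∀ s ∈ K' \ A', t < s := fun s hs => hmin s (Finset.mem_sdiff.mp hs).1
  have hAgt : ∀ s ∈ A', t < s := fun s hs => hmin s (hA' hs)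
  rw [hd1, hd2,
    gbrk_congr (rfl : (1:ℤ) = 1) (show (2:ℤ) + (K'.card : ℤ)
      = 2 + ((A'.card : ℤ) + ((K' \ A').card : ℤ)) by rw [hcard]),
    leibniz_step u i j t A' (K' \ A') htA htB hAgt hBgt, add_comm]

/-- `t` smaller than the inserted index `x`. -/
lemma H_low (u : Fin m → R) {x t : Fin m} (w : R) {K' : Finset (Fin m)}
    (htx : t < x) (htK' : t ∉ K') (hxK' : x ∉ K') (hmin : ∀ s ∈ K', t < s) :
    sgn R (((K'.filter fun a => x < a).card : ℤ))
        * gbrk 1 (2 + (K'.card : ℤ)) (u t) (cNest u 1 w (insert x K'))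
      = sgn R ((((insert t K').filter fun a => x < a).card : ℤ))
          * cNest u 1 w (insert x (insert t K')) := by
  have hfil : (insert t K').filter (fun a => x < a) = K'.filter (fun a => x < a) := by
    rw [Finset.filter_insert, if_neg (by exact fun h => absurd htx (not_lt_of_gt h))]
  have htjK : t ∉ insert x K' := by
    simp only [Finset.mem_insert, not_or]
    exact ⟨ne_of_lt htx, htK'⟩
  have hlt : ∀ s ∈ insert x K', t < s := by
    intro s hs
    rcases Finset.mem_insert.mp hs with h | h
    · exact h ▸ htx
    · exact hmin s h
  rw [hfil, Finset.insert_comm, cNest_insert_min u 1 w htjK hlt,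
    Finset.card_insert_of_notMem hxK',
    gbrk_congr (rfl : (1:ℤ) = 1)
      (show (1:ℤ) + ((K'.card + 1 : ℕ) : ℤ) = 2 + (K'.card : ℤ) by push_cast; ring)]

/-- `t` bigger than the inserted index `x`: swap step with correction. -/
lemma H_high (u : Fin m → R) {x t : Fin m} (w : R) {K' : Finset (Fin m)}
    (hxt : x < t) (htK' : t ∉ K') (hxK' : x ∉ K') (hmin : ∀ s ∈ K', t < s) :
    sgn R (((K'.filter fun a => x < a).card : ℤ))
        * gbrk 1 (2 + (K'.card : ℤ)) (u t) (cNest u 1 w (insert x K'))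
      = sgn R ((((insert t K').filter fun a => x < a).card : ℤ))
          * cNest u 1 w (insert x (insert t K'))
        + sgn R ((K'.card : ℤ))
          * gbrk 2 (1 + (K'.card : ℤ)) (gbrk 1 1 (u t) (u x)) (cNest u 1 w K') := by
  have hxmin : ∀ s ∈ K', x < s := fun s hs => lt_trans hxt (hmin s hs)
  have hfil1 : K'.filter (fun a => x < a) = K' := Finset.filter_true_of_mem hxmin
  have hfil2 : (insert t K').filter (fun a => x < a) = insert t K' := by
    rw [Finset.filter_insert, if_pos hxt, hfil1]
  have hxtK : x ∉ insert t K' := by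
    simp only [Finset.mem_insert, not_or]
    exact ⟨ne_of_lt hxt, hxK'⟩
  have hxlt : ∀ s ∈ insert t K', x < s := by
    intro s hs
    rcases Finset.mem_insert.mp hs with h | h
    · exact h ▸ hxt
    · exact hxmin s h
  rw [hfil1, hfil2, cNest_insert_min u 1 w hxK' hxmin, swap_step,
    ← cNest_insert_min u 1 w htK' hmin,
    gbrk_congr (rfl : (1:ℤ) = 1)
      (show (2:ℤ) + (K'.card : ℤ) = 1 + ((insert t K').card : ℤ) by
        rw [Finset.card_insert_of_notMem htK']; push_cast; ring),
    ← cNest_insert_min u 1 w hxtK hxlt,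
    Finset.card_insert_of_notMem htK',
    show (((K'.card + 1 : ℕ)) : ℤ) = (K'.card : ℤ) + 1 by push_cast; ring,
    sgn_add, sgn_odd (odd_one)]
  noncomm_ring

lemma extra_bot (u : Fin m → R) (i j t : Fin m) {K' : Finset (Fin m)}
    (htK' : t ∉ K') (hmin : ∀ s ∈ K', t < s) :
    sgn R ((K'.card : ℤ)) * gbrk 2 (1 + (K'.card : ℤ)) (gbrk 1 1 (u t) (u i)) (cNest u 1 (u j) K')
      = sgn R ((theta (insert t ∅) (insert t K' \ insert t ∅) : ℤ)
            + ((insert t K' \ insert t ∅).card : ℤ))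
          * gbrk (1 + ((insert t (∅ : Finset (Fin m))).card : ℤ))
              (1 + ((insert t K' \ insert t ∅).card : ℤ))
              (cNest u 1 (u i) (insert t ∅)) (cNest u 1 (u j) (insert t K' \ insert t ∅)) := by
  have hd : insert t K' \ insert t (∅ : Finset (Fin m)) = K' := by
    rw [Finset.insert_sdiff_insert, Finset.sdiff_eq_self_of_disjoint]
    simp [Finset.disjoint_singleton_right, htK']
  rw [hd, show (insert t (∅ : Finset (Fin m))) = {t} from rfl,
    theta_singleton_left hmin htK', cNest_singleton,
    Finset.card_singleton,
    gbrk_congr (show (1:ℤ) + ((1:ℕ):ℤ) = 2 by norm_num) (rfl : (1:ℤ) + (K'.card:ℤ) = _),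
    sgn_congr (show ((0:ℕ):ℤ) + (K'.card:ℤ) = (K'.card:ℤ) by norm_num)]

lemma extra_top (u : Fin m → R) (i j t : Fin m) {K' : Finset (Fin m)}
    (htK' : t ∉ K') (hmin : ∀ s ∈ K', t < s) :
    sgn R ((K'.card : ℤ)) * gbrk 2 (1 + (K'.card : ℤ)) (gbrk 1 1 (u t) (u j)) (cNest u 1 (u i) K')
      = sgn R ((theta K' (insert t K' \ K') : ℤ) + ((insert t K' \ K').card : ℤ))
          * gbrk (1 + (K'.card : ℤ)) (1 + ((insert t K' \ K').card : ℤ))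
              (cNest u 1 (u i) K') (cNest u 1 (u j) (insert t K' \ K')) := by
  have hd : insert t K' \ K' = {t} := by
    rw [Finset.insert_sdiff_of_notMem _ htK', Finset.sdiff_self]
    rfl
  rw [hd, theta_singleton_right hmin, cNest_singleton, Finset.card_singleton,
    gbrk_congr (rfl : (1:ℤ) + (K'.card:ℤ) = _) (show (1:ℤ) + ((1:ℕ):ℤ) = 2 by norm_num),
    gbrk_antisymm (1 + (K'.card:ℤ)) 2,
    sgn_even (show Even ((1 + (K'.card:ℤ)) * 2) from ⟨1 + (K'.card:ℤ), by ring⟩),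
    sgn_congr (show ((K'.card:ℕ):ℤ) + ((1:ℕ):ℤ) = (K'.card:ℤ) + 1 by push_cast; ring),
    sgn_add, sgn_odd odd_one]
  noncomm_ring

end HSteps

section MainLemma
variable {R : Type u} [Ring R] {m : ℕ}

lemma main_lemma (u : Fin m → R) (i j : Fin m) (hij : i < j) :
    ∀ (n : ℕ) (K : Finset (Fin m)), K.card = n → i ∉ K → j ∉ K → (∃ a ∈ K, j < a) →
    cNest u 2 (gbrk 1 1 (u i) (u j)) K
      = sgn R ((K.filter fun a => j < a).card : ℤ) * cNest u 1 (u i) (insert j K)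
        + sgn R ((K.filter fun a => i < a).card : ℤ) * cNest u 1 (u j) (insert i K)
        + ∑ A ∈ K.powerset.filter (fun A => (∃ a ∈ A, i < a) ∧ ∃ b ∈ K \ A, j < b),
            sgn R ((theta A (K \ A) : ℤ) + ((K \ A).card : ℤ))
              * gbrk (1 + (A.card : ℤ)) (1 + ((K \ A).card : ℤ))
                  (cNest u 1 (u i) A) (cNest u 1 (u j) (K \ A)) := by
  intro n
  induction n with
  | zero =>
      intro K hc _ _ hne
      obtain ⟨a, ha, _⟩ := hne
      rw [Finset.card_eq_zero] at hc
      subst hc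
      simp at ha
  | succ n ih =>
      intro K hc hiK hjK hne
      have hKne : K.Nonempty := by
        rw [← Finset.card_pos, hc]; omega
      set t := K.min' hKne with htdef
      have htK : t ∈ K := K.min'_mem hKne
      set K' := K.erase t with hK'def
      have htK' : t ∉ K' := Finset.notMem_erase t K
      have hKins : insert t K' = K := Finset.insert_erase htK
      have hcard' : K'.card = n := by
        rw [hK'def, Finset.card_erase_of_mem htK, hc]; omega
      have hmin : ∀ s ∈ K', t < s := fun s hs =>
        lt_of_le_of_ne (K.min'_le s (Finset.mem_of_mem_erase hs))
          (Ne.symm (Finset.ne_of_mem_erase hs))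
      have hiK' : i ∉ K' := fun h => hiK (Finset.mem_of_mem_erase h)
      have hjK' : j ∉ K' := fun h => hjK (Finset.mem_of_mem_erase h)
      have hti : t ≠ i := fun h => hiK (h ▸ htK)
      have htj : t ≠ j := fun h => hjK (h ▸ htK)
      rw [← hKins]
      by_cases hK'emp : K' = ∅
      · -- base case: K = {t}, necessarily j < t
        have hjt : j < t := by
          obtain ⟨a, ha, hja⟩ := hne
          have hat : a = t := by
            rw [← hKins, hK'emp] at ha
            simpa using ha
          exact hat ▸ hja
        rw [hK'emp]
        rw [show (insert t (∅ : Finset (Fin m))) = {t} from rfl]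
        have hfe : ({t} : Finset (Fin m)).powerset.filter
            (fun A => (∃ a ∈ A, i < a) ∧ ∃ b ∈ ({t} : Finset (Fin m)) \ A, j < b) = ∅ := by
          rw [Finset.filter_eq_empty_iff]
          intro A hA
          rcases Finset.subset_singleton_iff.mp (Finset.mem_powerset.mp hA) with h | h <;>
            subst h <;> simp
        rw [hfe, Finset.sum_empty, add_zero]
        have hf1 : ({t} : Finset (Fin m)).filter (fun a => j < a) = {t} := by
          rw [Finset.filter_singleton, if_pos hjt]
        have hf2 : ({t} : Finset (Fin m)).filter (fun a => i < a) = {t} := by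
          rw [Finset.filter_singleton, if_pos (lt_trans hij hjt)]
        have hjt' : j ∉ ({t} : Finset (Fin m)) := by simp [ne_of_lt hjt]
        have hit' : i ∉ ({t} : Finset (Fin m)) := by simp [ne_of_lt (lt_trans hij hjt)]
        rw [hf1, hf2, cNest_singleton,
          cNest_insert_min u 1 (u i) hjt' (by simpa using hjt),
          cNest_insert_min u 1 (u j) hit' (by simpa using lt_trans hij hjt),
          cNest_singleton, cNest_singleton, Finset.card_singleton,
          gbrk_congr (rfl : (1:ℤ) = 1) (show (1:ℤ) + ((1:ℕ):ℤ) = 2 by norm_num),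
          gbrk_congr (rfl : (1:ℤ) = 1) (show (1:ℤ) + ((1:ℕ):ℤ) = 2 by norm_num),
          sgn_odd (by norm_num : Odd ((1:ℕ) : ℤ)), gbrk_base]
        noncomm_ring
      · -- inductive step
        have hK'ne : K'.Nonempty := Finset.nonempty_iff_ne_empty.mpr hK'emp
        rw [cNest_insert_min u 2 (gbrk 1 1 (u i) (u j)) htK' hmin]
        rcases lt_trichotomy t i with hlt | heq | hgt
        · -- case t < i
          have htj2 : t < j := lt_trans hlt hij
          have hne' : ∃ a ∈ K', j < a := by
            obtain ⟨a, ha, hja⟩ := hne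
            refine ⟨a, Finset.mem_erase.mpr ⟨?_, ha⟩, hja⟩
            rintro rfl
            exact absurd hja (not_lt_of_gt htj2)
          rw [ih K' hcard' hiK' hjK' hne']
          simp only [Finset.sum_filter]
          rw [Finset.sum_powerset_insert htK']
          rw [gbrk_add_right, gbrk_add_right, gbrk_sgn_right, gbrk_sgn_right, gbrk_sum]
          have h3 : ∀ A' ∈ K'.powerset, gbrk 1 (2 + (K'.card : ℤ)) (u t)
              (if (∃ a ∈ A', i < a) ∧ ∃ b ∈ K' \ A', j < b then
                sgn R ((theta A' (K' \ A') : ℤ) + ((K' \ A').card : ℤ))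
                  * gbrk (1 + (A'.card : ℤ)) (1 + ((K' \ A').card : ℤ))
                      (cNest u 1 (u i) A') (cNest u 1 (u j) (K' \ A')) else 0)
            = (if (∃ a ∈ A', i < a) ∧ ∃ b ∈ insert t K' \ A', j < b then
                sgn R ((theta A' (insert t K' \ A') : ℤ) + ((insert t K' \ A').card : ℤ))
                  * gbrk (1 + (A'.card : ℤ)) (1 + ((insert t K' \ A').card : ℤ))
                      (cNest u 1 (u i) A') (cNest u 1 (u j) (insert t K' \ A')) else 0)
              + (if (∃ a ∈ insert t A', i < a) ∧ ∃ b ∈ insert t K' \ insert t A', j < b then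
                sgn R ((theta (insert t A') (insert t K' \ insert t A') : ℤ)
                    + ((insert t K' \ insert t A').card : ℤ))
                  * gbrk (1 + ((insert t A').card : ℤ)) (1 + ((insert t K' \ insert t A').card : ℤ))
                      (cNest u 1 (u i) (insert t A'))
                      (cNest u 1 (u j) (insert t K' \ insert t A')) else 0) := by
            intro A' hA'p
            have hA' := Finset.mem_powerset.mp hA'p
            have htA : t ∉ A' := fun h => htK' (hA' h)
            have hd1 : insert t K' \ A' = insert t (K' \ A') :=
              Finset.insert_sdiff_of_notMem _ htA
            have hd2 : insert t K' \ insert t A' = K' \ A' := insert_sdiff_insert_eq htK'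
            have he1 : (∃ b ∈ insert t K' \ A', j < b) ↔ ∃ b ∈ K' \ A', j < b := by
              rw [hd1]
              constructor
              · rintro ⟨b, hb, hjb⟩
                rcases Finset.mem_insert.mp hb with rfl | hb'
                · exact absurd hjb (not_lt_of_gt htj2)
                · exact ⟨b, hb', hjb⟩
              · rintro ⟨b, hb, hjb⟩
                exact ⟨b, Finset.mem_insert_of_mem hb, hjb⟩
            have he2 : (∃ a ∈ insert t A', i < a) ↔ ∃ a ∈ A', i < a := by
              constructor
              · rintro ⟨a, ha, hia⟩
                rcases Finset.mem_insert.mp ha with rfl | ha'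
                · exact absurd hia (not_lt_of_gt hlt)
                · exact ⟨a, ha', hia⟩
              · rintro ⟨a, ha, hia⟩
                exact ⟨a, Finset.mem_insert_of_mem ha, hia⟩
            by_cases hcnd : (∃ a ∈ A', i < a) ∧ ∃ b ∈ K' \ A', j < b
            · rw [if_pos hcnd, if_pos ⟨hcnd.1, he1.mpr hcnd.2⟩,
                if_pos ⟨he2.mpr hcnd.1, by rw [hd2]; exact hcnd.2⟩]
              exact H3_core u i j t htK' hmin hA'
            · rw [if_neg hcnd, if_neg (fun h => hcnd ⟨h.1, he1.mp h.2⟩),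
                if_neg (fun h => hcnd ⟨he2.mp h.1, hd2 ▸ h.2⟩), gbrk_zero_right, add_zero]
          rw [H_low u (u i) htj2 htK' hjK' hmin, H_low u (u j) hlt htK' hiK' hmin,
            Finset.sum_congr rfl h3, Finset.sum_add_distrib]
        · exact absurd heq hti
        · -- i < t
          rcases lt_trichotomy t j with htj2 | heqj | hjt
          · -- i < t < j
            have hne' : ∃ a ∈ K', j < a := by
              obtain ⟨a, ha, hja⟩ := hne
              refine ⟨a, Finset.mem_erase.mpr ⟨?_, ha⟩, hja⟩
              rintro rfl
              exact absurd hja (not_lt_of_gt htj2)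
            rw [ih K' hcard' hiK' hjK' hne']
            simp only [Finset.sum_filter]
            rw [Finset.sum_powerset_insert htK']
            rw [gbrk_add_right, gbrk_add_right, gbrk_sgn_right, gbrk_sgn_right, gbrk_sum]
            have H2 := H_high u (u j) hgt htK' hiK' hmin
            rw [extra_bot u i j t htK' hmin] at H2
            have hd2e : insert t K' \ insert t (∅ : Finset (Fin m)) = K' := by
              rw [insert_sdiff_insert_eq htK', Finset.sdiff_empty]
            have h3 : ∀ A' ∈ K'.powerset, gbrk 1 (2 + (K'.card : ℤ)) (u t)
                (if (∃ a ∈ A', i < a) ∧ ∃ b ∈ K' \ A', j < b then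
                  sgn R ((theta A' (K' \ A') : ℤ) + ((K' \ A').card : ℤ))
                    * gbrk (1 + (A'.card : ℤ)) (1 + ((K' \ A').card : ℤ))
                        (cNest u 1 (u i) A') (cNest u 1 (u j) (K' \ A')) else 0)
                + (if A' = ∅ then
                    sgn R ((theta (insert t ∅) (insert t K' \ insert t ∅) : ℤ)
                        + ((insert t K' \ insert t ∅).card : ℤ))
                      * gbrk (1 + ((insert t (∅ : Finset (Fin m))).card : ℤ))
                          (1 + ((insert t K' \ insert t ∅).card : ℤ))
                          (cNest u 1 (u i) (insert t ∅))
                          (cNest u 1 (u j) (insert t K' \ insert t ∅)) else 0)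
              = (if (∃ a ∈ A', i < a) ∧ ∃ b ∈ insert t K' \ A', j < b then
                  sgn R ((theta A' (insert t K' \ A') : ℤ) + ((insert t K' \ A').card : ℤ))
                    * gbrk (1 + (A'.card : ℤ)) (1 + ((insert t K' \ A').card : ℤ))
                        (cNest u 1 (u i) A') (cNest u 1 (u j) (insert t K' \ A')) else 0)
                + (if (∃ a ∈ insert t A', i < a) ∧ ∃ b ∈ insert t K' \ insert t A', j < b then
                  sgn R ((theta (insert t A') (insert t K' \ insert t A') : ℤ)
                      + ((insert t K' \ insert t A').card : ℤ))
                    * gbrk (1 + ((insert t A').card : ℤ))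
                        (1 + ((insert t K' \ insert t A').card : ℤ))
                        (cNest u 1 (u i) (insert t A'))
                        (cNest u 1 (u j) (insert t K' \ insert t A')) else 0) := by
              intro A' hA'p
              have hA' := Finset.mem_powerset.mp hA'p
              have htA : t ∉ A' := fun h => htK' (hA' h)
              have hd1 : insert t K' \ A' = insert t (K' \ A') :=
                Finset.insert_sdiff_of_notMem _ htA
              have hd2 : insert t K' \ insert t A' = K' \ A' := insert_sdiff_insert_eq htK'
              have he1 : (∃ b ∈ insert t K' \ A', j < b) ↔ ∃ b ∈ K' \ A', j < b := by
                rw [hd1]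
                constructor
                · rintro ⟨b, hb, hjb⟩
                  rcases Finset.mem_insert.mp hb with rfl | hb'
                  · exact absurd hjb (not_lt_of_gt htj2)
                  · exact ⟨b, hb', hjb⟩
                · rintro ⟨b, hb, hjb⟩
                  exact ⟨b, Finset.mem_insert_of_mem hb, hjb⟩
              by_cases hA0 : A' = ∅
              · subst hA0
                rw [if_neg (by simp), gbrk_zero_right, if_pos rfl, zero_add,
                  if_neg (by simp), zero_add, if_pos ?_]
                constructor
                · exact ⟨t, Finset.mem_insert_self t ∅, hgt⟩
                · obtain ⟨b, hb, hjb⟩ := hne'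
                  rw [hd2e]
                  exact ⟨b, hb, hjb⟩
              · have hA'ne : A'.Nonempty := Finset.nonempty_iff_ne_empty.mpr hA0
                obtain ⟨a0, ha0⟩ := hA'ne
                have hc1 : ∃ a ∈ A', i < a := ⟨a0, ha0, lt_trans hgt (hmin a0 (hA' ha0))⟩
                rw [if_neg hA0, add_zero]
                by_cases hc2 : ∃ b ∈ K' \ A', j < b
                · rw [if_pos ⟨hc1, hc2⟩, if_pos ⟨hc1, he1.mpr hc2⟩,
                    if_pos ⟨⟨t, Finset.mem_insert_self t A', hgt⟩, hd2 ▸ hc2⟩]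
                  exact H3_core u i j t htK' hmin hA'
                · rw [if_neg (fun h => hc2 h.2), gbrk_zero_right,
                    if_neg (fun h => hc2 (he1.mp h.2)),
                    if_neg (fun h => hc2 (hd2 ▸ h.2)), add_zero]
            have hs := Finset.sum_congr rfl h3
            rw [Finset.sum_add_distrib, Finset.sum_add_distrib,
              Finset.sum_ite_eq' K'.powerset ∅,
              if_pos (Finset.empty_mem_powerset K')] at hs
            have hSig := eq_sub_of_add_eq hs
            rw [H_low u (u i) htj2 htK' hjK' hmin, H2, hSig]
            abel
          · exact absurd heqj htj
          · -- j < t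
            have hne' : ∃ a ∈ K', j < a := by
              obtain ⟨s0, hs0⟩ := hK'ne
              exact ⟨s0, hs0, lt_trans hjt (hmin s0 hs0)⟩
            rw [ih K' hcard' hiK' hjK' hne']
            simp only [Finset.sum_filter]
            rw [Finset.sum_powerset_insert htK']
            rw [gbrk_add_right, gbrk_add_right, gbrk_sgn_right, gbrk_sgn_right, gbrk_sum]
            have H1 := H_high u (u i) hjt htK' hjK' hmin
            rw [extra_top u i j t htK' hmin] at H1
            have H2 := H_high u (u j) (lt_trans hij hjt) htK' hiK' hmin
            rw [extra_bot u i j t htK' hmin] at H2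
            have hd2e : insert t K' \ insert t (∅ : Finset (Fin m)) = K' := by
              rw [insert_sdiff_insert_eq htK', Finset.sdiff_empty]
            have hdK : insert t K' \ K' = {t} := by
              rw [Finset.insert_sdiff_of_notMem _ htK', Finset.sdiff_self]
              rfl
            have h3 : ∀ A' ∈ K'.powerset, gbrk 1 (2 + (K'.card : ℤ)) (u t)
                (if (∃ a ∈ A', i < a) ∧ ∃ b ∈ K' \ A', j < b then
                  sgn R ((theta A' (K' \ A') : ℤ) + ((K' \ A').card : ℤ))
                    * gbrk (1 + (A'.card : ℤ)) (1 + ((K' \ A').card : ℤ))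
                        (cNest u 1 (u i) A') (cNest u 1 (u j) (K' \ A')) else 0)
                + (if A' = ∅ then
                    sgn R ((theta (insert t ∅) (insert t K' \ insert t ∅) : ℤ)
                        + ((insert t K' \ insert t ∅).card : ℤ))
                      * gbrk (1 + ((insert t (∅ : Finset (Fin m))).card : ℤ))
                          (1 + ((insert t K' \ insert t ∅).card : ℤ))
                          (cNest u 1 (u i) (insert t ∅))
                          (cNest u 1 (u j) (insert t K' \ insert t ∅)) else 0)
                + (if A' = K' then
                    sgn R ((theta K' (insert t K' \ K') : ℤ) + ((insert t K' \ K').card : ℤ))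
                      * gbrk (1 + (K'.card : ℤ)) (1 + ((insert t K' \ K').card : ℤ))
                          (cNest u 1 (u i) K') (cNest u 1 (u j) (insert t K' \ K')) else 0)
              = (if (∃ a ∈ A', i < a) ∧ ∃ b ∈ insert t K' \ A', j < b then
                  sgn R ((theta A' (insert t K' \ A') : ℤ) + ((insert t K' \ A').card : ℤ))
                    * gbrk (1 + (A'.card : ℤ)) (1 + ((insert t K' \ A').card : ℤ))
                        (cNest u 1 (u i) A') (cNest u 1 (u j) (insert t K' \ A')) else 0)
                + (if (∃ a ∈ insert t A', i < a) ∧ ∃ b ∈ insert t K' \ insert t A', j < b then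
                  sgn R ((theta (insert t A') (insert t K' \ insert t A') : ℤ)
                      + ((insert t K' \ insert t A').card : ℤ))
                    * gbrk (1 + ((insert t A').card : ℤ))
                        (1 + ((insert t K' \ insert t A').card : ℤ))
                        (cNest u 1 (u i) (insert t A'))
                        (cNest u 1 (u j) (insert t K' \ insert t A')) else 0) := by
              intro A' hA'p
              have hA' := Finset.mem_powerset.mp hA'p
              have htA : t ∉ A' := fun h => htK' (hA' h)
              have hd1 : insert t K' \ A' = insert t (K' \ A') :=
                Finset.insert_sdiff_of_notMem _ htA
              have hd2 : insert t K' \ insert t A' = K' \ A' := insert_sdiff_insert_eq htK'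
              by_cases hA0 : A' = ∅
              · subst hA0
                have hAK : (∅ : Finset (Fin m)) ≠ K' := fun h => hK'emp h.symm
                rw [if_neg (by simp), gbrk_zero_right, if_pos rfl, if_neg hAK, zero_add,
                  add_zero, if_neg (by simp), zero_add, if_pos ?_]
                constructor
                · exact ⟨t, Finset.mem_insert_self t ∅, lt_trans hij hjt⟩
                · obtain ⟨b, hb, hjb⟩ := hne'
                  rw [hd2e]
                  exact ⟨b, hb, hjb⟩
              · by_cases hAK : A' = K'
                · subst hAK
                  obtain ⟨s0, hs0⟩ := hK'ne
                  rw [if_neg (by simp), gbrk_zero_right, if_neg hA0, if_pos rfl, zero_add,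
                    zero_add,
                    if_pos ⟨⟨s0, hs0, lt_trans (lt_trans hij hjt) (hmin s0 hs0)⟩,
                      ⟨t, by rw [hdK]; exact Finset.mem_singleton_self t, hjt⟩⟩,
                    if_neg ?_, add_zero]
                  rintro ⟨-, b, hb, -⟩
                  rw [hd2] at hb
                  simp at hb
                · have hA'ne : A'.Nonempty := Finset.nonempty_iff_ne_empty.mpr hA0
                  have hKA'ne : (K' \ A').Nonempty :=
                    Finset.sdiff_nonempty.mpr (fun h => hAK (subset_antisymm hA' h))
                  obtain ⟨a0, ha0⟩ := hA'ne
                  obtain ⟨b0, hb0⟩ := hKA'ne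
                  have hc1 : ∃ a ∈ A', i < a :=
                    ⟨a0, ha0, lt_trans (lt_trans hij hjt) (hmin a0 (hA' ha0))⟩
                  have hc2 : ∃ b ∈ K' \ A', j < b :=
                    ⟨b0, hb0, lt_trans hjt (hmin b0 (Finset.mem_sdiff.mp hb0).1)⟩
                  rw [if_neg hA0, if_neg hAK, add_zero, add_zero, if_pos ⟨hc1, hc2⟩,
                    if_pos ⟨hc1,
                      ⟨t, Finset.mem_sdiff.mpr ⟨Finset.mem_insert_self t K', htA⟩, hjt⟩⟩,
                    if_pos ⟨⟨t, Finset.mem_insert_self t A', lt_trans hij hjt⟩, hd2 ▸ hc2⟩]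
                  exact H3_core u i j t htK' hmin hA'
            have hs := Finset.sum_congr rfl h3
            rw [Finset.sum_add_distrib, Finset.sum_add_distrib, Finset.sum_add_distrib,
              Finset.sum_ite_eq' K'.powerset ∅,
              Finset.sum_ite_eq' K'.powerset K',
              if_pos (Finset.empty_mem_powerset K'),
              if_pos (Finset.mem_powerset_self K')] at hs
            have hSig := eq_sub_of_add_eq (eq_sub_of_add_eq hs)
            rw [H1, H2, hSig]
            abel

end MainLemma


/-- Let `J ⊆ {1,…,m}`, `i, j ∈ J` with `i < j` and `J_{>j} ≠ ∅`.  Then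
`c(J∖{i,j},[u_i,u_j]) = (−1)^{|J_{>j}|} c(J∖{i},u_i) − (−1)^{|J_{>i}|} c(J∖{j},u_j)
 + Σ (−1)^{θ(A,B)+|B|} [c(A,u_i),c(B,u_j)]`, the sum over ordered partitions
`J∖{i,j} = A ⊔ B` with `A` containing an element `> i` and `B` containing an element
`> j`. -/
theorem cNest_hard_identity {k R : Type u} [CommRing k] [Ring R] [Algebra k R] {m : ℕ}
    (𝒜 : ℤ → Submodule k R) [GradedAlgebra 𝒜]
    (u : Fin m → R) (hu : ∀ i, u i ∈ 𝒜 1)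
    (J : Finset (Fin m)) (i j : Fin m) (hi : i ∈ J) (hj : j ∈ J) (hij : i < j)
    (hne : ∃ a ∈ J, j < a) :
    cNest u 2 (gbrk 1 1 (u i) (u j)) (J \ {i, j})
      = sgn R ((J.filter (fun a => j < a)).card : ℤ) * cNest u 1 (u i) (J.erase i)
        - sgn R ((J.filter (fun a => i < a)).card : ℤ) * cNest u 1 (u j) (J.erase j)
        + ∑ A ∈ (J \ {i, j}).powerset.filter
            (fun A => (∃ a ∈ A, i < a) ∧ ∃ b ∈ (J \ {i, j}) \ A, j < b),
            sgn R ((theta A ((J \ {i, j}) \ A) : ℤ) + (((J \ {i, j}) \ A).card : ℤ))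
              * gbrk (1 + (A.card : ℤ)) (1 + (((J \ {i, j}) \ A).card : ℤ))
                  (cNest u 1 (u i) A) (cNest u 1 (u j) ((J \ {i, j}) \ A)) := by
  have hiS : i ∉ J \ {i, j} := by simp
  have hjS : j ∉ J \ {i, j} := by simp
  have hneS : ∃ a ∈ J \ {i, j}, j < a := by
    obtain ⟨a, ha, hja⟩ := hne
    refine ⟨a, Finset.mem_sdiff.mpr ⟨ha, ?_⟩, hja⟩
    simp only [Finset.mem_insert, Finset.mem_singleton, not_or]
    exact ⟨fun h => absurd (h ▸ hja) (not_lt_of_gt hij), fun h => absurd (h ▸ hja) (lt_irrefl j)⟩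
  have h1 : J.erase i = insert j (J \ {i, j}) := by
    ext x
    simp only [Finset.mem_erase, Finset.mem_insert, Finset.mem_sdiff, Finset.mem_singleton,
      not_or]
    constructor
    · rintro ⟨hxi, hxJ⟩
      by_cases hxj : x = j
      · exact Or.inl hxj
      · exact Or.inr ⟨hxJ, hxi, hxj⟩
    · rintro (rfl | ⟨hxJ, hxi, _⟩)
      · exact ⟨ne_of_gt hij, hj⟩
      · exact ⟨hxi, hxJ⟩
  have h2 : J.erase j = insert i (J \ {i, j}) := by
    ext x
    simp only [Finset.mem_erase, Finset.mem_insert, Finset.mem_sdiff, Finset.mem_singleton,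
      not_or]
    constructor
    · rintro ⟨hxj, hxJ⟩
      by_cases hxi : x = i
      · exact Or.inl hxi
      · exact Or.inr ⟨hxJ, hxi, hxj⟩
    · rintro (rfl | ⟨hxJ, _, hxj⟩)
      · exact ⟨ne_of_lt hij, hi⟩
      · exact ⟨hxj, hxJ⟩
  have h3 : J.filter (fun a => j < a) = (J \ {i, j}).filter (fun a => j < a) := by
    ext x
    simp only [Finset.mem_filter, Finset.mem_sdiff, Finset.mem_insert, Finset.mem_singleton,
      not_or]
    constructor
    · rintro ⟨hxJ, hjx⟩
      exact ⟨⟨hxJ, fun h => absurd (h ▸ hjx) (not_lt_of_gt hij),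
        fun h => absurd (h ▸ hjx) (lt_irrefl j)⟩, hjx⟩
    · rintro ⟨⟨hxJ, _, _⟩, hjx⟩
      exact ⟨hxJ, hjx⟩
  have h4 : J.filter (fun a => i < a)
      = insert j ((J \ {i, j}).filter (fun a => i < a)) := by
    ext x
    simp only [Finset.mem_filter, Finset.mem_insert, Finset.mem_sdiff, Finset.mem_singleton,
      not_or]
    constructor
    · rintro ⟨hxJ, hix⟩
      by_cases hxj : x = j
      · exact Or.inl hxj
      · exact Or.inr ⟨⟨hxJ, fun h => absurd (h ▸ hix) (lt_irrefl i), hxj⟩, hix⟩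
    · rintro (rfl | ⟨⟨hxJ, _, _⟩, hix⟩)
      · exact ⟨hj, hij⟩
      · exact ⟨hxJ, hix⟩
  have hjF : j ∉ (J \ {i, j}).filter (fun a => i < a) :=
    fun h => hjS (Finset.mem_of_mem_filter j h)
  rw [main_lemma u i j hij (J \ {i, j}).card (J \ {i, j}) rfl hiS hjS hneS,
    h1, h2, h3, h4, Finset.card_insert_of_notMem hjF,
    show ((((J \ {i, j}).filter (fun a => i < a)).card + 1 : ℕ) : ℤ)
      = (((J \ {i, j}).filter (fun a => i < a)).card : ℤ) + 1 by push_cast; ring,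
    sgn_add, sgn_odd odd_one]
  noncomm_ring
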